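/- Let d ≥ 1 and α ∈ [0,1]. Let ρ be a d×d complex density matrix (positive semidefinite with trace 1), and let O be a d×d Hermitian matrix with spectral decomposition O = Σ_{i=1}^d λ_i·P_i into real eigenvalues λ_i and rank-one orthogonal projections P_i with Σ_i P_i = I. Define the depolarized state ρ' := (1−α)·ρ + (α/d)·I, outcome probabilities p_i := Tr(ρ'·P_i), mean m := Σ_i λ_i·p_i, and single-shot variance η² := Σ_i λ_i²·p_i − m². Then p_i = (1−α)·Tr(ρ·P_i) + α/d for each i, and η² ≥ α·σ_uniform², where σ_uniform² := (1/d)·Σ_i λ_i² − ((1/d)·Σ_i λ_i)². -/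

import Mathlib

/-!
Writing `q i = Tr(ρ P i)` and `u i = 1/d`, the outcome distribution of the depolarized state is
the mixture `p = (1-α) q + α u`. For a fixed observable the variance is concave in the
distribution: `Var(p) = (1-α) Var(q) + α Var(u) + α(1-α) (E_q - E_u)²`, and `Var(q) ≥ 0`
because `q` is a probability vector (`Tr(ρ P) ≥ 0` for positive semidefinite `ρ` and `P`).
-/

open Matrix
open scoped ComplexOrder

section WeightedVariance

variable {ι : Type*} [Fintype ι]

def weightedMean (w x : ι → ℝ) : ℝ := ∑ i, x i * w i

def weightedVariance (w x : ι → ℝ) : ℝ := ∑ i, x i ^ 2 * w i - weightedMean w x ^ 2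

theorem weightedVariance_eq_sum_mul_sq {w : ι → ℝ} (hw : ∑ i, w i = 1) (x : ι → ℝ) :
    weightedVariance w x = ∑ i, w i * (x i - weightedMean w x) ^ 2 := by
  calc weightedVariance w x = ∑ i, x i ^ 2 * w i - 2 * weightedMean w x * ∑ i, x i * w i +
        weightedMean w x ^ 2 * ∑ i, w i := by
        rw [hw]; simp only [weightedVariance, weightedMean]; ring
    _ = ∑ i, w i * (x i - weightedMean w x) ^ 2 := by
        simp only [Finset.mul_sum, ← Finset.sum_sub_distrib, ← Finset.sum_add_distrib]
        exact Finset.sum_congr rfl fun i _ => by ring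

theorem weightedVariance_nonneg {w : ι → ℝ} (hw₀ : ∀ i, 0 ≤ w i) (hw : ∑ i, w i = 1)
    (x : ι → ℝ) : 0 ≤ weightedVariance w x := by
  rw [weightedVariance_eq_sum_mul_sq hw]
  exact Finset.sum_nonneg fun i _ => mul_nonneg (hw₀ i) (sq_nonneg _)

theorem weightedVariance_const (c : ℝ) (x : ι → ℝ) :
    weightedVariance (fun _ => c) x = c * ∑ i, x i ^ 2 - (c * ∑ i, x i) ^ 2 := by
  simp only [weightedVariance, weightedMean, ← Finset.sum_mul, mul_comm c]

theorem weightedVariance_mix (α : ℝ) (q u x : ι → ℝ) :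
    weightedVariance (fun i => (1 - α) * q i + α * u i) x =
      (1 - α) * weightedVariance q x + α * weightedVariance u x +
        α * (1 - α) * (weightedMean q x - weightedMean u x) ^ 2 := by
  have hmean : ∀ f : ι → ℝ, ∑ i, f i * ((1 - α) * q i + α * u i) =
      (1 - α) * ∑ i, f i * q i + α * ∑ i, f i * u i := fun f => by
    simp only [Finset.mul_sum, ← Finset.sum_add_distrib]
    exact Finset.sum_congr rfl fun i _ => by ring
  simp only [weightedVariance, weightedMean, hmean]
  ring

theorem mul_weightedVariance_le_weightedVariance_mix {α : ℝ} (hα₀ : 0 ≤ α) (hα₁ : α ≤ 1)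
    {q x : ι → ℝ} (hq : 0 ≤ weightedVariance q x) (u : ι → ℝ) :
    α * weightedVariance u x ≤ weightedVariance (fun i => (1 - α) * q i + α * u i) x := by
  rw [weightedVariance_mix]
  have hβ : 0 ≤ 1 - α := sub_nonneg.mpr hα₁
  linarith [mul_nonneg hβ hq, mul_nonneg (mul_nonneg hα₀ hβ)
    (sq_nonneg (weightedMean q x - weightedMean u x))]

end WeightedVariance

theorem Matrix.trace_eq_rank_of_isIdempotentElem {K n : Type*} [Field K] [Fintype n]
    [DecidableEq n] {P : Matrix n n K} (hP : IsIdempotentElem P) : P.trace = P.rank := by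
  have h : IsIdempotentElem (toLin' P) := hP.map toLinAlgEquiv'
  rw [← trace_toLin'_eq, (LinearMap.IsIdempotentElem.isProj_range _ h).trace]
  rfl

open scoped MatrixOrder in
theorem Matrix.PosSemidef.trace_mul_nonneg {𝕜 n : Type*} [RCLike 𝕜] [Fintype n] [DecidableEq n]
    {A B : Matrix n n 𝕜} (hA : A.PosSemidef) (hB : B.PosSemidef) : 0 ≤ (A * B).trace := by
  have hsqrt : B = CFC.sqrt B * (CFC.sqrt B)ᴴ := by
    rw [(CFC.sqrt_nonneg B).posSemidef.isHermitian.eq, CFC.sqrt_mul_sqrt_self B hB.nonneg]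
  rw [hsqrt, ← mul_assoc, trace_mul_cycle]
  exact (hA.conjTranspose_mul_mul_same (CFC.sqrt B)).trace_nonneg

theorem Matrix.IsHermitian.posSemidef_of_mul_self_eq {𝕜 n : Type*} [RCLike 𝕜] [Fintype n]
    {P : Matrix n n 𝕜} (hP : P.IsHermitian) (hidem : P * P = P) : P.PosSemidef := by
  simpa [hP.eq, hidem] using posSemidef_conjTranspose_mul_self P

theorem depolarized_single_shot_variance_lower_bound_general
    (d : ℕ) (α : ℝ) (hα : α ∈ Set.Icc (0 : ℝ) 1)
    (ρ : Matrix (Fin d) (Fin d) ℂ) (hρ : ρ.PosSemidef) (hρtr : ρ.trace = 1)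
    (lam : Fin d → ℝ) (P : Fin d → Matrix (Fin d) (Fin d) ℂ)
    (hPherm : ∀ i, (P i).IsHermitian)
    (hPidem : ∀ i, P i * P i = P i)
    (hPrank : ∀ i, (P i).rank = 1)
    (hPsum : ∑ i, P i = 1)
    (ρ' : Matrix (Fin d) (Fin d) ℂ)
    (hρ' : ρ' = ((1 - α : ℝ) : ℂ) • ρ + ((α / d : ℝ) : ℂ) • 1)
    (p : Fin d → ℝ) (hp : ∀ i, p i = ((ρ' * P i).trace).re)
    (m : ℝ) (hm : m = ∑ i, lam i * p i)
    (η2 : ℝ) (hη2 : η2 = ∑ i, lam i ^ 2 * p i - m ^ 2) :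
    (∀ i, (ρ' * P i).trace = ((1 - α : ℝ) : ℂ) * (ρ * P i).trace + ((α / d : ℝ) : ℂ)) ∧
      α * ((1 / d) * ∑ i, lam i ^ 2 - ((1 / d) * ∑ i, lam i) ^ 2) ≤ η2 := by
  obtain ⟨hα₀, hα₁⟩ := hα
  have htrP : ∀ i, (P i).trace = 1 := fun i => by
    rw [trace_eq_rank_of_isIdempotentElem (hPidem i), hPrank i, Nat.cast_one]
  have hprob : ∀ i, (ρ' * P i).trace =
      ((1 - α : ℝ) : ℂ) * (ρ * P i).trace + ((α / d : ℝ) : ℂ) := fun i => by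
    simp [hρ', add_mul, htrP i]
  refine ⟨hprob, ?_⟩
  have hρP : ∀ i, 0 ≤ (ρ * P i).trace := fun i =>
    hρ.trace_mul_nonneg ((hPherm i).posSemidef_of_mul_self_eq (hPidem i))
  set q : Fin d → ℝ := fun i => ((ρ * P i).trace).re
  have hq : ∀ i, (ρ * P i).trace = q i := fun i =>
    Complex.eq_re_of_ofReal_le (by exact_mod_cast hρP i)
  have hq_sum : ∑ i, q i = 1 := by
    have : ∑ i, (ρ * P i).trace = 1 := by rw [← trace_sum, ← Finset.mul_sum, hPsum, mul_one, hρtr]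
    exact_mod_cast (by simpa only [hq] using this : ∑ i, (q i : ℂ) = 1)
  have hp_mix : p = fun i => (1 - α) * q i + α * (1 / d) := funext fun i => by
    rw [hp, hprob, hq, ← Complex.ofReal_mul, ← Complex.ofReal_add, Complex.ofReal_re, mul_one_div]
  have hη2_var : η2 = weightedVariance p lam := by rw [hη2, hm]; rfl
  rw [hη2_var, hp_mix, ← weightedVariance_const]
  exact mul_weightedVariance_le_weightedVariance_mix hα₀ hα₁
    (weightedVariance_nonneg (fun i => (Complex.nonneg_iff.mp (hρP i)).1) hq_sum _) _

/-- single-shot variance lower bound under depolarizing noise.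
Let `ρ` be a `d × d` density matrix, `O = ∑ i, lam i • P i` a Hermitian matrix with real
eigenvalues `lam i` and rank-one orthogonal projections `P i` summing to the identity.
For the depolarized state `ρ' = (1-α)·ρ + (α/d)·I`, the outcome probabilities satisfy
`Tr(ρ'·P i) = (1-α)·Tr(ρ·P i) + α/d`, and the single-shot variance
`η² = ∑ i, lam i²·p i - (∑ i, lam i·p i)²` is at least `α·σ_uniform²`, where
`σ_uniform² = (1/d)·∑ i, lam i² - ((1/d)·∑ i, lam i)²`. -/
theorem depolarized_single_shot_variance_lower_bound
    (d : ℕ) (hd : 1 ≤ d) (α : ℝ) (hα : α ∈ Set.Icc (0 : ℝ) 1)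
    (ρ : Matrix (Fin d) (Fin d) ℂ) (hρ : ρ.PosSemidef) (hρtr : ρ.trace = 1)
    (lam : Fin d → ℝ) (P : Fin d → Matrix (Fin d) (Fin d) ℂ)
    (hPherm : ∀ i, (P i).IsHermitian)
    (hPidem : ∀ i, P i * P i = P i)
    (hPrank : ∀ i, (P i).rank = 1)
    (hPsum : ∑ i, P i = 1)
    (O : Matrix (Fin d) (Fin d) ℂ)
    (hO : O = ∑ i, (lam i : ℂ) • P i)
    (ρ' : Matrix (Fin d) (Fin d) ℂ)
    (hρ' : ρ' = ((1 - α : ℝ) : ℂ) • ρ + ((α / d : ℝ) : ℂ) • 1)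
    (p : Fin d → ℝ) (hp : ∀ i, p i = ((ρ' * P i).trace).re)
    (m : ℝ) (hm : m = ∑ i, lam i * p i)
    (η2 : ℝ) (hη2 : η2 = ∑ i, lam i ^ 2 * p i - m ^ 2) :
    (∀ i, (ρ' * P i).trace = ((1 - α : ℝ) : ℂ) * (ρ * P i).trace + ((α / d : ℝ) : ℂ)) ∧
      α * ((1 / d) * ∑ i, lam i ^ 2 - ((1 / d) * ∑ i, lam i) ^ 2) ≤ η2 :=
  depolarized_single_shot_variance_lower_bound_general d α hα ρ hρ hρtr lam P hPherm hPidem hPrank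
    hPsum ρ' hρ' p hp m hm η2 hη2
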